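/- arXiv:2210.05748 — 3 statements merged into one kernel-verified Lean document; each statement's English description precedes it below -/
import Mathlib

section
/- Let Q be a normal lattice polytope in ℝ^d and F a face of Q of dimension g with a strict supporting hyperplane (or F = Q). Then every integer vector x in the linear span L_F of differences of points of F can be written as an integer linear combination of lattice points of F ∩ ℤ^d whose coefficients sum to zero. -/
open Finset

/-- A point of `ℝ^d` with integer coordinates. -/
def IsLatticePt {d : ℕ} (x : Fin d → ℝ) : Prop := ∀ i, ∃ n : ℤ, x i = n

/-! Write `x = ∑ gᵢ vᵢ` with real weights summing to zero, over lattice points `vᵢ` of `F`: the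
face is the convex hull of the vertices of `Q` it contains. For a large integer `n` the weights
`gᵢ + n` are nonnegative with sum `k = n · #{vᵢ}`, so `x + n ∑ vᵢ` is a lattice point of
`k F ⊆ k Q`. Normality splits it into `k` lattice points of `Q`, and these lie in `F` because the
supporting functional attains its maximum at their average. Hence `x = ∑ wⱼ - n ∑ vᵢ`, with
coefficient sum `k - k = 0`. -/

open scoped Pointwise

section

variable {E : Type*} [AddCommGroup E] [Module ℝ E]

def IsLatticeNormal (Λ : AddSubgroup E) (Q : Set E) : Prop :=
  ∀ k : ℕ, 0 < k → ∀ p ∈ Λ, p ∈ (k : ℝ) • Q →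
    ∃ w : Fin k → E, (∀ i, w i ∈ Q ∧ w i ∈ Λ) ∧ ∑ i, w i = p

variable {φ : E →ₗ[ℝ] ℝ} {c : ℝ}

theorem convexHull_inter_hyperplane_subset {S : Set E} (hS : ∀ v ∈ S, φ v ≤ c) :
    {m ∈ convexHull ℝ S | φ m = c} ⊆ convexHull ℝ {v ∈ S | φ v = c} := by
  set H := convexHull ℝ {v ∈ S | φ v = c}
  have hH : ∀ m ∈ H, φ m = c :=
    convexHull_min (fun v hv => hv.2) (convex_hyperplane φ.isLinear c)
  have hle : ∀ m ∈ H ∪ {m | φ m < c}, φ m ≤ c := by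
    rintro m (hm | hm)
    exacts [(hH m hm).le, le_of_lt hm]
  -- a segment leaving the face `H` immediately drops below the hyperplane
  have hconv : Convex ℝ (H ∪ {m | φ m < c}) := by
    refine convex_iff_forall_pos.2 fun x hx y hy a b ha hb hab => ?_
    by_cases hxy : x ∈ H ∧ y ∈ H
    · exact Or.inl (convex_convexHull ℝ _ hxy.1 hxy.2 ha.le hb.le hab)
    refine Or.inr ?_
    have hlt : φ x < c ∨ φ y < c := by
      rcases hx with hx | hx <;> rcases hy with hy | hy <;> tauto
    have hx' := hle x hx
    have hy' := hle y hy
    have hc : a * c + b * c = c := by rw [← add_mul, hab, one_mul]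
    show φ (a • x + b • y) < c
    rw [map_add, map_smul, map_smul, smul_eq_mul, smul_eq_mul]
    rcases hlt with h | h
    · linarith [mul_lt_mul_of_pos_left h ha, mul_le_mul_of_nonneg_left hy' hb.le]
    · linarith [mul_le_mul_of_nonneg_left hx' ha.le, mul_lt_mul_of_pos_left h hb]
  have hS' : S ⊆ H ∪ {m | φ m < c} := fun v hv =>
    (hS v hv).eq_or_lt.imp (fun h => subset_convexHull ℝ _ ⟨hv, h⟩) id
  rintro m ⟨hm, hmc⟩
  exact (convexHull_min hS' hconv hm).resolve_right (by simp [hmc])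

theorem map_eq_of_sum_eq_card_smul {Q : Set E} (hQ : ∀ m ∈ Q, φ m ≤ c) {k : ℕ}
    {w : Fin k → E} (hw : ∀ i, w i ∈ Q) {z : E} (hz : φ z = c) (hsum : ∑ i, w i = (k : ℝ) • z)
    (i : Fin k) : φ (w i) = c := by
  have : ∑ i, φ (w i) = ∑ _i : Fin k, c := by
    simp [← map_sum, hsum, hz]
  exact (sum_eq_sum_iff_of_le fun i _ => hQ _ (hw i)).1 this i (mem_univ i)

theorem sum_smul_add_nsmul_sum_mem_smul_convexHull {ι : Type*} {s : Finset ι} (hs : s.Nonempty)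
    {n : ℕ} (hn : 0 < n) (p : ι → E) {g : ι → ℝ} (hg : ∑ i ∈ s, g i = 0)
    (hgn : ∀ i ∈ s, 0 ≤ g i + n) :
    ∑ i ∈ s, g i • p i + n • ∑ i ∈ s, p i ∈ ((n * #s : ℕ) : ℝ) • convexHull ℝ (p '' s) := by
  have hμ : ∑ i ∈ s, (g i + n) = ((n * #s : ℕ) : ℝ) := by
    simp [sum_add_distrib, hg, mul_comm]
  have hk : (0 : ℝ) < (n * #s : ℕ) := by have := hs.card_pos; positivity
  refine ⟨s.centerMass (fun i => g i + n) p,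
    s.centerMass_mem_convexHull hgn (hμ ▸ hk) fun i hi => Set.mem_image_of_mem p hi, ?_⟩
  simp only [centerMass]
  rw [hμ, smul_inv_smul₀ hk.ne']
  simp [add_smul, sum_add_distrib, Nat.cast_smul_eq_nsmul, smul_sum]

variable {Λ : AddSubgroup E}

theorem exists_add_nsmul_sum_eq_sum_of_isLatticeNormal {Q : Set E} (hQ : Convex ℝ Q)
    (hnormal : IsLatticeNormal Λ Q) (hφ : ∀ m ∈ Q, φ m ≤ c) {ι : Type*} {s : Finset ι} {p : ι → E}
    (hp : ∀ i ∈ s, p i ∈ {m ∈ Q | φ m = c} ∧ p i ∈ Λ) {g : ι → ℝ} (hg : ∑ i ∈ s, g i = 0)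
    (hx : ∑ i ∈ s, g i • p i ∈ Λ) :
    ∃ (n : ℕ) (u : Fin (n * #s) → E), (∀ j, u j ∈ {m ∈ Q | φ m = c} ∧ u j ∈ Λ) ∧
      ∑ i ∈ s, g i • p i + n • ∑ i ∈ s, p i = ∑ j, u j := by
  rcases s.eq_empty_or_nonempty with rfl | hs
  · exact ⟨0, fun _ => 0, fun j => absurd j.isLt (by simp), by simp⟩
  obtain ⟨n, hn⟩ := exists_nat_gt (∑ i ∈ s, |g i|)
  have hn0 : 0 < n := by exact_mod_cast (sum_nonneg fun i _ => abs_nonneg (g i)).trans_lt hn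
  have hgn : ∀ i ∈ s, 0 ≤ g i + n := fun i hi => by
    have := single_le_sum (fun i _ => abs_nonneg (g i)) hi
    linarith [neg_abs_le (g i)]
  obtain ⟨z, hz, hzP⟩ := sum_smul_add_nsmul_sum_mem_smul_convexHull hs hn0 p hg hgn
  have hzF : z ∈ {m ∈ Q | φ m = c} := by
    refine convexHull_min ?_ (hQ.inter (convex_hyperplane φ.isLinear c)) hz
    rintro _ ⟨i, hi, rfl⟩
    exact (hp i hi).1
  have hPΛ : ∑ i ∈ s, g i • p i + n • ∑ i ∈ s, p i ∈ Λ :=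
    add_mem hx (nsmul_mem (sum_mem fun i hi => (hp i hi).2) n)
  obtain ⟨u, hu, hsum⟩ := hnormal _ (by have := hs.card_pos; positivity) _ hPΛ ⟨z, hzF.1, hzP⟩
  have huF : ∀ j, φ (u j) = c :=
    map_eq_of_sum_eq_card_smul hφ (fun j => (hu j).1) hzF.2 (hsum.trans hzP.symm)
  exact ⟨n, u, fun j => ⟨⟨(hu j).1, huF j⟩, (hu j).2⟩, hsum.symm⟩

theorem exists_fin_zero_sum_combination_eq_sum_sub_sum {A : Set E} {ι κ : Type*} [Fintype ι]
    [Fintype κ] (hcard : Fintype.card ι = Fintype.card κ) {u : ι → E} {v : κ → E}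
    (hu : ∀ i, u i ∈ A) (hv : ∀ j, v j ∈ A) :
    ∃ (s : ℕ) (w : Fin s → E) (cf : Fin s → ℤ), (∀ i, w i ∈ A) ∧ ∑ i, cf i = 0 ∧
      ∑ i, u i - ∑ j, v j = ∑ i, (cf i : ℝ) • w i := by
  let e := Fintype.equivFin (ι ⊕ κ)
  refine ⟨_, Sum.elim u v ∘ e.symm, Sum.elim 1 (-1) ∘ e.symm,
    fun i => (Sum.forall (p := (Sum.elim u v · ∈ A))).2 ⟨hu, hv⟩ (e.symm i), ?_, ?_⟩
  · simp only [Function.comp_apply]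
    rw [e.symm.sum_comp (Sum.elim 1 (-1)), Fintype.sum_sum_type]
    simp [hcard]
  · simp only [Function.comp_apply]
    rw [e.symm.sum_comp (fun q => ((Sum.elim (1 : ι → ℤ) (-1) q : ℤ) : ℝ) • Sum.elim u v q),
      Fintype.sum_sum_type]
    simp [sub_eq_add_neg]

theorem exists_zero_sum_int_combination_of_mem_vectorSpan_face {S : Set E} (hSΛ : S ⊆ Λ)
    (hnormal : IsLatticeNormal Λ (convexHull ℝ S)) (hφ : ∀ m ∈ convexHull ℝ S, φ m ≤ c)
    {x : E} (hxΛ : x ∈ Λ) (hx : x ∈ vectorSpan ℝ {m ∈ convexHull ℝ S | φ m = c}) :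
    ∃ (s : ℕ) (w : Fin s → E) (cf : Fin s → ℤ),
      (∀ i, w i ∈ {m ∈ convexHull ℝ S | φ m = c} ∧ w i ∈ Λ) ∧ ∑ i, cf i = 0 ∧
      x = ∑ i, (cf i : ℝ) • w i := by
  set F := {m ∈ convexHull ℝ S | φ m = c}
  set A := {v ∈ S | φ v = c}
  have hspan : vectorSpan ℝ F ≤ vectorSpan ℝ A :=
    calc _ ≤ vectorSpan ℝ (convexHull ℝ A) := vectorSpan_mono ℝ
          (convexHull_inter_hyperplane_subset fun v hv => hφ v (subset_convexHull ℝ S hv))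
      _ = vectorSpan ℝ A := by rw [← direction_affineSpan, affineSpan_convexHull,
          direction_affineSpan]
  rw [← Subtype.range_coe (s := A)] at hspan
  obtain ⟨s, g, hg, hxg⟩ := (mem_vectorSpan_iff_eq_weightedVSub ℝ).1 (hspan hx)
  rw [s.weightedVSub_eq_linear_combination hg] at hxg
  have hA : ∀ a : A, (a : E) ∈ F ∧ (a : E) ∈ Λ := fun a =>
    ⟨⟨subset_convexHull ℝ S a.2.1, a.2.2⟩, hSΛ a.2.1⟩
  obtain ⟨n, u, hu, hsum⟩ :=
    exists_add_nsmul_sum_eq_sum_of_isLatticeNormal (convex_convexHull ℝ S) hnormal hφ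
      (fun a _ => hA a) hg (hxg ▸ hxΛ)
  have hx_eq : x = ∑ j, u j - ∑ q : Fin n × s, (q.2 : E) := by
    rw [← hsum, ← hxg, Fintype.sum_prod_type]
    simp [sum_attach]
  rw [hx_eq]
  exact exists_fin_zero_sum_combination_eq_sum_sub_sum (A := F ∩ Λ) (by simp) hu
    fun q : Fin n × s => hA q.2

end

def integerLattice (d : ℕ) : AddSubgroup (Fin d → ℝ) :=
  AddSubgroup.pi Set.univ fun _ => (Int.castAddHom ℝ).range

theorem isLatticePt_iff_mem_integerLattice {d : ℕ} {x : Fin d → ℝ} :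
    IsLatticePt x ↔ x ∈ integerLattice d := by
  simp only [IsLatticePt, integerLattice, AddSubgroup.mem_pi, Set.mem_univ, true_implies,
    AddMonoidHom.mem_range, Int.coe_castAddHom, eq_comm]

theorem exists_linearMap_face_eq {d : ℕ} {Q F : Set (Fin d → ℝ)}
    (hface : F = Q ∨ ∃ (N : Fin d → ℝ) (c : ℝ), F ⊆ Q ∧
      (∀ m ∈ F, ∑ i, N i * m i = c) ∧ (∀ m ∈ Q, m ∉ F → ∑ i, N i * m i < c)) :
    ∃ (φ : (Fin d → ℝ) →ₗ[ℝ] ℝ) (c : ℝ), (∀ m ∈ Q, φ m ≤ c) ∧ F = {m ∈ Q | φ m = c} := by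
  rcases hface with rfl | ⟨N, c, hFQ, hFc, hlt⟩
  · exact ⟨0, 0, fun _ _ => le_rfl, by simp⟩
  refine ⟨dotProductBilin ℝ ℝ N, c, fun m hm => ?_, ?_⟩
  · by_cases hmF : m ∈ F
    exacts [(hFc m hmF).le, (hlt m hm hmF).le]
  · ext m
    exact ⟨fun hm => ⟨hFQ hm, hFc m hm⟩, fun hm => by_contra fun hmF => (hlt m hm.1 hmF).ne hm.2⟩

/-- If `Q` is a normal lattice polytope and `F` is a face of `Q`
(either `F = Q` or `F` has a strict supporting hyperplane), then every integer
vector in the linear span `L_F` of differences of points of `F` is an integer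
linear combination of lattice points of `F` with coefficients summing to zero. -/
theorem normal_polytope_face_lattice_combination {d : ℕ}
    (S : Finset (Fin d → ℝ)) (hSlat : ∀ v ∈ S, IsLatticePt v)
    (Q : Set (Fin d → ℝ)) (hQ : Q = convexHull ℝ (S : Set (Fin d → ℝ)))
    (hnormal : ∀ k : ℕ, 0 < k → ∀ x : Fin d → ℝ, IsLatticePt x →
      x ∈ (fun y => (k : ℝ) • y) '' Q →
      ∃ w : Fin k → (Fin d → ℝ), (∀ i, w i ∈ Q ∧ IsLatticePt (w i)) ∧ ∑ i, w i = x)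
    (F : Set (Fin d → ℝ))
    (hface : F = Q ∨ ∃ (N : Fin d → ℝ) (c : ℝ), F ⊆ Q ∧
      (∀ m ∈ F, ∑ i, N i * m i = c) ∧ (∀ m ∈ Q, m ∉ F → ∑ i, N i * m i < c))
    (x : Fin d → ℝ) (hxlat : IsLatticePt x)
    (hxspan : x ∈ Submodule.span ℝ {y : Fin d → ℝ | ∃ a ∈ F, ∃ b ∈ F, y = a - b}) :
    ∃ (s : ℕ) (w : Fin s → (Fin d → ℝ)) (cf : Fin s → ℤ),
      (∀ i, w i ∈ F ∧ IsLatticePt (w i)) ∧ (∑ i, cf i) = 0 ∧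
      x = ∑ i, (cf i : ℝ) • w i := by
  have hx : x ∈ vectorSpan ℝ F := by
    have hdiff : {y | ∃ a ∈ F, ∃ b ∈ F, y = a - b} = F -ᵥ F := by
      ext y
      simp [Set.mem_vsub, eq_comm]
    rwa [hdiff, ← vectorSpan_def] at hxspan
  obtain ⟨φ, c, hφ, rfl⟩ := exists_linearMap_face_eq hface
  subst hQ
  have hnormal' : IsLatticeNormal (integerLattice d) (convexHull ℝ S) := by
    intro k hk p hp hpQ
    simpa only [isLatticePt_iff_mem_integerLattice] using
      hnormal k hk p (isLatticePt_iff_mem_integerLattice.2 hp) (by rwa [Set.image_smul])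
  simpa only [isLatticePt_iff_mem_integerLattice] using
    exists_zero_sum_int_combination_of_mem_vectorSpan_face
      (fun v hv => isLatticePt_iff_mem_integerLattice.1 (hSlat v hv)) hnormal' hφ
      (isLatticePt_iff_mem_integerLattice.1 hxlat) hx
end

section
/- Let Q ⊆ ℝ^d be a full-dimensional normal lattice polytope. Then for each standard basis vector e_i there exist integers n₁, ..., n_s with Σ n_j = 0 such that e_i = Σ_j n_j m_j, where m₁, ..., m_s are the lattice points of Q. -/
/-!
A full-dimensional convex body has an interior point `x`. For large `n` the lattice
points `n ⌊n x⌋` and `n ⌊n x⌋ + eᵢ` both lie in `n² Q`, since after division by `n²`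
they are within `2 / n` of `x`. By normality each is a sum of `n²` lattice points of `Q`;
subtracting the two decompositions writes `eᵢ` with integer coefficients summing to
`n² - n² = 0`.
-/

open Finset Filter Topology Pointwise

theorem Finset.exists_natCoeffs_of_forall_mem {M ι : Type*} [AddCommMonoid M] [DecidableEq M]
    [Fintype ι] {A : Finset M} {w : ι → M} (hw : ∀ l, w l ∈ A) :
    ∃ c : M → ℕ, ∑ m ∈ A, c m = Fintype.card ι ∧
      ∑ m ∈ A, c m • m = ∑ l, w l := by
  refine ⟨fun m ↦ #{l | w l = m}, ?_, ?_⟩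
  · exact (card_eq_sum_card_fiberwise fun l _ ↦ hw l).symm
  · rw [← sum_fiberwise_of_maps_to (g := w) fun l _ ↦ hw l]
    refine sum_congr rfl fun m _ ↦ ?_
    rw [sum_congr rfl fun l hl ↦ (mem_filter.1 hl).2, sum_const]

theorem Finset.exists_intCoeffs_sum_eq_zero_of_sub {M ι : Type*} [AddCommGroup M]
    [Fintype ι] {A : Finset M} {w w' : ι → M} (hw : ∀ l, w l ∈ A) (hw' : ∀ l, w' l ∈ A) :
    ∃ cf : M → ℤ, ∑ m ∈ A, cf m = 0 ∧ ∑ l, w l - ∑ l, w' l = ∑ m ∈ A, cf m • m := by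
  classical
  obtain ⟨c, hc, hcw⟩ := exists_natCoeffs_of_forall_mem hw
  obtain ⟨c', hc', hcw'⟩ := exists_natCoeffs_of_forall_mem hw'
  refine ⟨fun m ↦ c m - c' m, ?_, ?_⟩
  · simp only [sum_sub_distrib, ← Nat.cast_sum, hc, hc', sub_self]
  · simp only [sub_smul, sum_sub_distrib, natCast_zsmul, hcw, hcw']

theorem tendsto_floor_mul_div_atTop {R : Type*} [TopologicalSpace R] [Field R] [LinearOrder R]
    [IsStrictOrderedRing R] [OrderTopology R] [FloorRing R] (a : R) :
    Tendsto (fun x ↦ (⌊x * a⌋ : R) / x) atTop (𝓝 a) := by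
  have lower : Tendsto (fun x : R ↦ a - x⁻¹) atTop (𝓝 a) := by
    simpa using tendsto_const_nhds.sub (tendsto_inv_atTop_zero (𝕜 := R))
  refine tendsto_of_tendsto_of_tendsto_of_le_of_le' lower tendsto_const_nhds ?_ ?_
  · filter_upwards [eventually_gt_atTop 0] with x hx
    rw [le_div_iff₀ hx, sub_mul, inv_mul_cancel₀ hx.ne']
    linarith [Int.sub_one_lt_floor (x * a)]
  · filter_upwards [eventually_gt_atTop 0] with x hx
    rw [div_le_iff₀ hx, mul_comm a]
    exact Int.floor_le (x * a)

theorem tendsto_pi_floor_mul_div_atTop {ι : Type*} (x : ι → ℝ) :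
    Tendsto (fun n : ℕ ↦ fun j ↦ (⌊n * x j⌋ : ℝ) / n) atTop (𝓝 x) :=
  tendsto_pi_nhds.2 fun j ↦
    (tendsto_floor_mul_div_atTop (x j)).comp tendsto_natCast_atTop_atTop

theorem eventually_intCast_mem_sq_smul_of_mem_interior {ι : Type*} {Q : Set (ι → ℝ)}
    {x : ι → ℝ} (hx : x ∈ interior Q) (v : ι → ℤ) :
    ∀ᶠ n : ℕ in atTop,
      (fun j ↦ ((n * ⌊n * x j⌋ + v j : ℤ) : ℝ)) ∈ ((n ^ 2 : ℕ) : ℝ) • Q := by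
  have hv : Tendsto (fun n : ℕ ↦ fun j ↦ (v j : ℝ) / n ^ 2) atTop (𝓝 0) :=
    tendsto_pi_nhds.2 fun j ↦ by
      simpa using (tendsto_const_nhds (x := (v j : ℝ))).div_atTop
        ((tendsto_pow_atTop two_ne_zero).comp tendsto_natCast_atTop_atTop)
  have hlim := (tendsto_pi_floor_mul_div_atTop x).add hv
  rw [add_zero] at hlim
  filter_upwards [hlim.eventually (mem_interior_iff_mem_nhds.1 hx), eventually_gt_atTop 0]
    with n hn hn0
  refine ⟨_, hn, funext fun j ↦ ?_⟩
  have : (n : ℝ) ≠ 0 := by positivity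
  simp only [Pi.smul_apply, Pi.add_apply, smul_eq_mul]
  push_cast
  field_simp

theorem basis_vector_combination_general {d : ℕ} (A : Finset (Fin d → ℤ))
    (Q : Set (Fin d → ℝ))
    (hQ : Q = convexHull ℝ ((fun m : Fin d → ℤ => fun i => (m i : ℝ)) '' (A : Set (Fin d → ℤ))))
    (hfull : Submodule.span ℝ {y : Fin d → ℝ | ∃ a ∈ Q, ∃ b ∈ Q, y = a - b} = ⊤)
    (hnormal : ∀ k : ℕ, 0 < k → ∀ m : Fin d → ℤ,
      (fun i => (m i : ℝ)) ∈ (fun y : Fin d → ℝ => (k : ℝ) • y) '' Q →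
      ∃ w : Fin k → (Fin d → ℤ), (∀ i, w i ∈ A) ∧ ∑ i, w i = m)
    (i : Fin d) :
    ∃ cf : (Fin d → ℤ) → ℤ, (∑ m ∈ A, cf m) = 0 ∧
      (Pi.single i 1 : Fin d → ℤ) = ∑ m ∈ A, cf m • m := by
  have : Nonempty (Fin d) := ⟨i⟩
  have hspan : vectorSpan ℝ Q = ⊤ := by
    rw [vectorSpan_def, ← hfull]
    congr 1
    ext y
    simp [Set.mem_vsub, eq_comm]
  have hconvex : Convex ℝ Q := hQ ▸ convex_convexHull ℝ _
  obtain ⟨x, hx⟩ := hconvex.interior_nonempty_iff_affineSpan_eq_top.2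
    ((AffineSubspace.affineSpan_eq_top_iff_vectorSpan_eq_top_of_nontrivial ℝ _ _).2 hspan)
  obtain ⟨n, hn, hshifted, hbase⟩ := ((eventually_gt_atTop 0).and <|
    (eventually_intCast_mem_sq_smul_of_mem_interior hx (Pi.single i 1)).and
      (eventually_intCast_mem_sq_smul_of_mem_interior hx 0)).exists
  obtain ⟨w, hwA, hw⟩ := hnormal _ (pow_pos hn 2) _ hshifted
  obtain ⟨w', hwA', hw'⟩ := hnormal _ (pow_pos hn 2) _ hbase
  obtain ⟨cf, hcf, hsum⟩ := exists_intCoeffs_sum_eq_zero_of_sub hwA hwA'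
  refine ⟨cf, hcf, ?_⟩
  rw [← hsum, hw, hw']
  ext j
  simp

/-- For a full-dimensional normal lattice polytope `Q` with lattice
points `A`, each standard basis vector `e_i` is an integer linear combination of
lattice points of `Q` with coefficients summing to zero. -/
theorem basis_vector_combination {d : ℕ} (A : Finset (Fin d → ℤ))
    (Q : Set (Fin d → ℝ))
    (hQ : Q = convexHull ℝ ((fun m : Fin d → ℤ => fun i => (m i : ℝ)) '' (A : Set (Fin d → ℤ))))
    (hA : ∀ m : Fin d → ℤ, m ∈ A ↔ (fun i => (m i : ℝ)) ∈ Q)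
    (hfull : Submodule.span ℝ {y : Fin d → ℝ | ∃ a ∈ Q, ∃ b ∈ Q, y = a - b} = ⊤)
    (hnormal : ∀ k : ℕ, 0 < k → ∀ m : Fin d → ℤ,
      (fun i => (m i : ℝ)) ∈ (fun y : Fin d → ℝ => (k : ℝ) • y) '' Q →
      ∃ w : Fin k → (Fin d → ℤ), (∀ i, w i ∈ A) ∧ ∑ i, w i = m)
    (i : Fin d) :
    ∃ cf : (Fin d → ℤ) → ℤ, (∑ m ∈ A, cf m) = 0 ∧
      (Pi.single i 1 : Fin d → ℤ) = ∑ m ∈ A, cf m • m :=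
  basis_vector_combination_general A Q hQ hfull hnormal i
end

section
/- Let H(x,y,z) = z − y − (x−1)² and γ ∈ ℂ. Along the curve t ↦ (1+γt, t, t+γ²t²), which lies in the zero set of H, the log-gradient (−2(1+γt)γt, −t, t+γ²t²) converges projectively, as t → 0, to the direction [−2γ : −1 : 1]. Hence every direction of the form [α : −1 : 1] arises as a limiting log-gradient direction along some curve on V(H) approaching (1,0,0). -/
open Filter

/-- The log-gradient `∇_log H(z) = (z₁ ∂H/∂z₁, z₂ ∂H/∂z₂, z₃ ∂H/∂z₃)`. -/
noncomputable def logGrad (H : (Fin 3 → ℂ) → ℂ) (z : Fin 3 → ℂ) : Fin 3 → ℂ :=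
  fun i => z i * fderiv ℂ H z (Pi.single i 1)

/-- `H(x,y,z) = z − y − (x−1)²`. -/
noncomputable def Hpoly : (Fin 3 → ℂ) → ℂ := fun v => v 2 - v 1 - (v 0 - 1) ^ 2

/-- The curve `t ↦ (1+γt, t, t+γ²t²)`. -/
noncomputable def curveγ (γ : ℂ) : ℂ → (Fin 3 → ℂ) :=
  fun t => ![1 + γ * t, t, t + γ ^ 2 * t ^ 2]

/-!
Along the curve every coordinate of the log-gradient of `H` vanishes to first order in `t`.
Divided by `t` it becomes the polynomial vector `(−2γ(1+γt), −1, 1+γ²t)`, continuous at `t = 0`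
with value `(−2γ, −1, 1)`; taking `γ = −α/2` gives any prescribed first coordinate `α`.
-/

open Topology

lemma fderiv_Hpoly_apply (z v : Fin 3 → ℂ) :
    fderiv ℂ Hpoly z v = v 2 - v 1 - 2 * (z 0 - 1) * v 0 := by
  have hsq := ((hasFDerivAt_apply (𝕜 := ℂ) 0 z).sub_const 1).pow 2
  have hH : HasFDerivAt Hpoly _ z := ((hasFDerivAt_apply 2 z).sub (hasFDerivAt_apply 1 z)).sub hsq
  rw [hH.fderiv]
  simp

lemma logGrad_Hpoly (z : Fin 3 → ℂ) :
    logGrad Hpoly z = ![-2 * z 0 * (z 0 - 1), -z 1, z 2] := by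
  ext i
  fin_cases i <;> simp [logGrad, fderiv_Hpoly_apply]
  ring

lemma Hpoly_curveγ (γ t : ℂ) : Hpoly (curveγ γ t) = 0 := by
  simp only [Hpoly, curveγ, Matrix.cons_val, Matrix.cons_val_one, Matrix.cons_val_zero]
  ring

lemma logGrad_Hpoly_curveγ (γ t : ℂ) :
    logGrad Hpoly (curveγ γ t) = ![-2 * (1 + γ * t) * (γ * t), -t, t + γ ^ 2 * t ^ 2] := by
  rw [logGrad_Hpoly]
  ext i
  fin_cases i <;> simp [curveγ]

lemma inv_smul_logGrad_Hpoly_curveγ (γ : ℂ) {t : ℂ} (ht : t ≠ 0) :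
    t⁻¹ • logGrad Hpoly (curveγ γ t) = ![-2 * γ * (1 + γ * t), -1, 1 + γ ^ 2 * t] := by
  rw [logGrad_Hpoly_curveγ]
  ext i
  fin_cases i <;> simp <;> field_simp

lemma tendsto_inv_smul_logGrad_Hpoly_curveγ (γ : ℂ) :
    Tendsto (fun t : ℂ => t⁻¹ • logGrad Hpoly (curveγ γ t))
      (𝓝[{t : ℂ | t ≠ 0}] 0) (𝓝 ![-2 * γ, -1, 1]) := by
  have hlim : Tendsto (fun t : ℂ => ![-2 * γ * (1 + γ * t), -1, 1 + γ ^ 2 * t])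
      (𝓝[{t : ℂ | t ≠ 0}] 0) (𝓝 ![-2 * γ, -1, 1]) := by
    refine tendsto_nhdsWithin_of_tendsto_nhds (Continuous.tendsto' (by fun_prop) _ _ ?_)
    simp
  refine hlim.congr' ?_
  filter_upwards [self_mem_nhdsWithin] with t ht
  exact (inv_smul_logGrad_Hpoly_curveγ γ ht).symm

/-- along `t ↦ (1+γt, t, t+γ²t²) ⊆ V(H)`, the log-gradient
`(−2(1+γt)γt, −t, t+γ²t²)` converges projectively (after dividing by `t`) to
`[−2γ : −1 : 1]` as `t → 0`; hence every direction `[α : −1 : 1]` arises as a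
limiting log-gradient direction along some such curve approaching `(1,0,0)`. -/
theorem all_directions_arise :
    (∀ γ t : ℂ, Hpoly (curveγ γ t) = 0) ∧
    (∀ γ t : ℂ, logGrad Hpoly (curveγ γ t)
        = ![-2 * (1 + γ * t) * (γ * t), -t, t + γ ^ 2 * t ^ 2]) ∧
    (∀ γ : ℂ, Tendsto (fun t : ℂ => t⁻¹ • logGrad Hpoly (curveγ γ t))
        (nhdsWithin 0 {t : ℂ | t ≠ 0}) (nhds (![-2 * γ, -1, 1] : Fin 3 → ℂ))) ∧
    (∀ α : ℂ, ∃ γ : ℂ,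
      Tendsto (fun t : ℂ => t⁻¹ • logGrad Hpoly (curveγ γ t))
        (nhdsWithin 0 {t : ℂ | t ≠ 0}) (nhds (![α, -1, 1] : Fin 3 → ℂ))) := by
  refine ⟨Hpoly_curveγ, logGrad_Hpoly_curveγ, tendsto_inv_smul_logGrad_Hpoly_curveγ,
    fun α => ⟨-α / 2, ?_⟩⟩
  convert tendsto_inv_smul_logGrad_Hpoly_curveγ (-α / 2) using 3
  ring
end
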